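/- For every integer n ≥ 0 and every real x > 0, the function i_n is differentiable at x with derivative i_n'(x) = (n/x)·i_n(x) + i_{n+1}(x). -/

import Mathlib

open Real Finset

/-- Modified spherical Bessel function of the second kind `k_n`, explicit closed form. -/
noncomputable def kBes (n : ℕ) (x : ℝ) : ℝ :=
  (Real.exp (-x) / x) *
    ∑ l ∈ Finset.range (n + 1),
      (Nat.factorial (n + l) : ℝ) /
        ((Nat.factorial l : ℝ) * (Nat.factorial (n - l) : ℝ) * (2 * x) ^ l)

/-- Modified spherical Bessel function of the first kind `i_n`, explicit closed form. -/
noncomputable def iBes (n : ℕ) (x : ℝ) : ℝ :=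
  (1 / (2 * x)) *
    (Real.exp x *
        ∑ l ∈ Finset.range (n + 1),
          (-1 : ℝ) ^ l * (Nat.factorial (n + l) : ℝ) /
            ((Nat.factorial l : ℝ) * (Nat.factorial (n - l) : ℝ) * (2 * x) ^ l)
      + (-1 : ℝ) ^ (n + 1) * Real.exp (-x) *
        ∑ l ∈ Finset.range (n + 1),
          (Nat.factorial (n + l) : ℝ) /
            ((Nat.factorial l : ℝ) * (Nat.factorial (n - l) : ℝ) * (2 * x) ^ l))

/-!
With `y_n(t) = ∑_{l ≤ n} (n + l)! / (l! (n - l)!) (t / 2)^l` the Bessel polynomial,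
`i_n(x) = (e^x y_n(-1/x) + (-1)^(n+1) e^(-x) y_n(1/x)) / (2x)`. For `s = ±1` the function
`f_n(x) = e^(-s x) y_n(s/x) / (2x)` satisfies `f_n' = (n/x) f_n - s f_(n+1)`: by the chain rule this
is the polynomial identity `y_(n+1) = y_n + X ((n + 1) y_n + X y_n')`, which on coefficients is
the recurrence `c(n+1, l+1) = c(n, l+1) + 2 (n + l + 1) c(n, l)`. Taking `s = -1` and
`s = 1` with the sign `(-1)^(n+1)` gives the recurrence for `i_n`.
-/

open Polynomial
open scoped Nat

/-- `c(n, l) = (n + l)! / (l! (n - l)!)` for `l ≤ n` (`cast_besselCoeff`), written so that it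
vanishes for `l > n`, where the factorial formula with truncated subtraction does not. -/
def besselCoeff (n l : ℕ) : ℕ := n.choose l * (n + 1).ascFactorial l

@[simp] lemma besselCoeff_zero_right (n : ℕ) : besselCoeff n 0 = 1 := by simp [besselCoeff]

lemma besselCoeff_eq_zero_of_lt {n l : ℕ} (h : n < l) : besselCoeff n l = 0 := by
  simp [besselCoeff, Nat.choose_eq_zero_of_lt h]

lemma besselCoeff_succ_succ (n l : ℕ) :
    besselCoeff (n + 1) (l + 1) = besselCoeff n (l + 1) + 2 * (n + l + 1) * besselCoeff n l := by
  have hchoose := Nat.add_one_mul_choose_eq n l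
  have hasc := Nat.succ_ascFactorial (n + 1) l
  rw [Nat.choose_succ_succ'] at hchoose
  simp only [besselCoeff, Nat.choose_succ_succ', Nat.ascFactorial_succ, Nat.succ_eq_add_one] at *
  linear_combination
    (n.choose (l + 1) + 2 * n.choose l) * hasc - (n + 1 + 1).ascFactorial l * hchoose

lemma cast_besselCoeff {n l : ℕ} (h : l ≤ n) :
    (besselCoeff n l : ℝ) = (n + l)! / (l ! * (n - l)!) := by
  rw [besselCoeff, Nat.cast_mul, Nat.cast_choose ℝ h, ← Nat.factorial_mul_ascFactorial n l]
  push_cast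
  field_simp

noncomputable def besselPoly (n : ℕ) : ℝ[X] :=
  ∑ l ∈ range (n + 1), C ((besselCoeff n l : ℝ) / 2 ^ l) * X ^ l

lemma coeff_besselPoly (n l : ℕ) : (besselPoly n).coeff l = besselCoeff n l / 2 ^ l := by
  simp only [besselPoly, finsetSum_coeff, coeff_C_mul_X_pow, sum_ite_eq, mem_range]
  split_ifs with h
  · rfl
  · simp [besselCoeff_eq_zero_of_lt (by omega : n < l)]

lemma coeff_X_mul_derivative {R : Type*} [CommSemiring R] (p : R[X]) (l : ℕ) :
    (X * derivative p).coeff l = l * p.coeff l := by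
  cases l with
  | zero => simp
  | succ l => rw [coeff_X_mul, coeff_derivative]; push_cast; ring

lemma besselPoly_succ (n : ℕ) :
    besselPoly (n + 1) =
      besselPoly n + X * (C ((n : ℝ) + 1) * besselPoly n + X * derivative (besselPoly n)) := by
  ext l
  cases l with
  | zero => simp [coeff_besselPoly]
  | succ l =>
    rw [coeff_add, coeff_X_mul, coeff_add, coeff_C_mul, coeff_X_mul_derivative]
    simp only [coeff_besselPoly, besselCoeff_succ_succ]
    push_cast
    field_simp
    ring

noncomputable def besselExpTerm (n : ℕ) (s x : ℝ) : ℝ :=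
  exp (-(s * x)) * (besselPoly n).eval (s / x) / (2 * x)

lemma hasDerivAt_besselExpTerm (n : ℕ) {s x : ℝ} (hs : s * s = 1) (hx : x ≠ 0) :
    HasDerivAt (besselExpTerm n s)
      (n / x * besselExpTerm n s x - s * besselExpTerm (n + 1) s x) x := by
  have hexp : HasDerivAt (fun y => exp (-(s * y))) (exp (-(s * x)) * -(s * 1)) x :=
    ((hasDerivAt_id x).const_mul s).neg.exp
  have hpoly : HasDerivAt (fun y => (besselPoly n).eval (s / y))
      ((derivative (besselPoly n)).eval (s / x) * ((0 * x - s * 1) / x ^ 2)) x :=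
    ((besselPoly n).hasDerivAt (s / x)).comp x ((hasDerivAt_const x s).fun_div (hasDerivAt_id x) hx)
  have hden : HasDerivAt (fun y => 2 * y) (2 * 1) x := (hasDerivAt_id x).const_mul 2
  refine ((hexp.fun_mul hpoly).fun_div hden (by simpa using hx)).congr_deriv ?_
  simp only [besselExpTerm, besselPoly_succ, eval_add, eval_mul, eval_X, eval_C]
  field_simp
  linear_combination
    (x * (besselPoly n).eval (s / x) * (n + 1) + s * (derivative (besselPoly n)).eval (s / x)) * hs

lemma eval_besselPoly_div (n : ℕ) (s x : ℝ) :
    (besselPoly n).eval (s / x) =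
      ∑ l ∈ range (n + 1), s ^ l * (n + l)! / (l ! * (n - l)! * (2 * x) ^ l) := by
  simp only [besselPoly, eval_finsetSum, eval_mul, eval_C, eval_pow, eval_X]
  refine sum_congr rfl fun l hl => ?_
  rw [cast_besselCoeff (Nat.lt_succ_iff.mp (mem_range.mp hl))]
  simp only [div_eq_mul_inv, mul_inv, mul_pow, inv_pow]
  ring

lemma iBes_eq_besselExpTerm (n : ℕ) (x : ℝ) :
    iBes n x = besselExpTerm n (-1) x + (-1) ^ (n + 1) * besselExpTerm n 1 x := by
  simp only [iBes, besselExpTerm, eval_besselPoly_div, neg_mul, one_mul, neg_neg, one_pow]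
  ring

/-- For every integer `n ≥ 0` and every real `x > 0`, `i_n` is differentiable at `x`
with derivative `i_n'(x) = (n/x)·i_n(x) + i_{n+1}(x)`. -/
theorem iBes_hasDerivAt (n : ℕ) (x : ℝ) (hx : 0 < x) :
    HasDerivAt (iBes n) ((n : ℝ) / x * iBes n x + iBes (n + 1) x) x := by
  have hI : iBes n = fun y => besselExpTerm n (-1) y + (-1) ^ (n + 1) * besselExpTerm n 1 y :=
    funext (iBes_eq_besselExpTerm n)
  have hminus := hasDerivAt_besselExpTerm n (s := -1) (by norm_num) hx.ne'
  have hplus := hasDerivAt_besselExpTerm n (s := 1) (by norm_num) hx.ne'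
  rw [hI]
  refine (hminus.add (hplus.const_mul ((-1 : ℝ) ^ (n + 1)))).congr_deriv ?_
  simp only [iBes_eq_besselExpTerm]
  ring
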